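/- arXiv:1801.06013 — 2 statements merged into one kernel-verified Lean document; each statement's English description precedes it below -/
import Mathlib

section
/- Assume $(b_n)$ is $q$-increasing, i.e., $b_{n-1}/b_n \leq q$ for all $n \geq 1$ and some $0 < q < 1$. Then $u_{n,k} \leq q^{k^2}/(q^2;q^2)_k$ for all $n,k \geq 0$, and consequently $U_n = \sum_k u_{n,k}^2 \leq (q^2;q^2)_\infty^{-2} \sum_{k=0}^\infty q^{2k^2}$, so $(U_n)$ is bounded. -/
/-!
The bound `c_k = q^{k²}/(q²;q²)_k` is a supersolution of the recurrence: `q`-increase gives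
`b_{n-2k-2} ≤ q^{2k+2} b_n` and `b_{n-2k-1} ≤ q^{2k+1} b_n`, and `c` satisfies
`q^{2k+2} c_{k+1} + q^{2k+1} c_k = c_{k+1}`, so `u_{n,k} ≤ c_k` follows by induction on `n`.
Since `(q²;q²)_∞ ≤ (q²;q²)_k`, squaring and summing bounds `U_n`.
-/

/-- The coefficients `u_{n,k}` of `x^n/(b_0⋯b_{n-1})` in the basis `P_{n-2k}`,
defined via their recurrence (`b_m = 0` for `m < 0`, `u_{n,k} = 0` for `k < 0`). -/
noncomputable def usec (b : ℕ → ℝ) : ℕ → ℕ → ℝ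
  | 0, 0 => 1
  | 0, _ + 1 => 0
  | n + 1, 0 => usec b n 0
  | n + 1, k + 1 =>
      ((if 2 * (k + 1) ≤ n then b (n - 2 * (k + 1)) else 0) * usec b n (k + 1) +
        (if 2 * (k + 1) ≤ n + 1 then b (n + 1 - 2 * (k + 1)) else 0) * usec b n k) / b n

/-- `U_n = s_{2n}/(b_0²⋯b_{n-1}²) = ∑_{k ≤ ⌊n/2⌋} u_{n,k}²`. -/
noncomputable def Useq (b : ℕ → ℝ) (n : ℕ) : ℝ :=
  ∑ k ∈ Finset.range (n / 2 + 1), (usec b n k) ^ 2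

open Finset

/-- `(q²;q²)_k`. -/
noncomputable def qPochSq (q : ℝ) (k : ℕ) : ℝ :=
  ∏ j ∈ range k, (1 - q ^ (2 * j + 2))

section qPochSq

variable {q : ℝ}

lemma one_sub_pow_pos (hq0 : 0 ≤ q) (hq1 : q < 1) {m : ℕ} (hm : m ≠ 0) : 0 < 1 - q ^ m :=
  sub_pos.2 (pow_lt_one₀ hq0 hq1 hm)

lemma qPochSq_pos (hq0 : 0 ≤ q) (hq1 : q < 1) (k : ℕ) : 0 < qPochSq q k :=
  prod_pos fun _ _ => one_sub_pow_pos hq0 hq1 (by omega)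

lemma qPochSq_succ (q : ℝ) (k : ℕ) : qPochSq q (k + 1) = qPochSq q k * (1 - q ^ (2 * k + 2)) :=
  prod_range_succ _ _

lemma pow_mul_add_pow_mul_div_qPochSq {k : ℕ} (hq : 1 - q ^ (2 * k + 2) ≠ 0) :
    q ^ (2 * k + 2) * (q ^ ((k + 1) ^ 2) / qPochSq q (k + 1)) +
      q ^ (2 * k + 1) * (q ^ (k ^ 2) / qPochSq q k) = q ^ ((k + 1) ^ 2) / qPochSq q (k + 1) := by
  have hsq : q ^ ((k + 1) ^ 2) = q ^ (2 * k + 1) * q ^ (k ^ 2) := by rw [← pow_add]; ring_nf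
  rcases eq_or_ne (qPochSq q k) 0 with hP | hP
  · simp [qPochSq_succ, hP]
  · rw [qPochSq_succ, hsq]
    field_simp
    ring

lemma summable_log_one_sub_pow (hq0 : 0 ≤ q) (hq1 : q < 1) :
    Summable fun j : ℕ => Real.log (1 - q ^ (2 * j + 2)) := by
  have hgeom : Summable fun j : ℕ => q ^ (2 * j + 2) :=
    (summable_geometric_of_lt_one hq0 hq1).of_nonneg_of_le (fun _ => pow_nonneg hq0 _)
      fun j => pow_le_pow_of_le_one hq0 hq1.le (by omega)
  simpa [sub_eq_add_neg] using Real.summable_log_one_add_of_summable hgeom.neg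

lemma tprod_one_sub_pow_pos (hq0 : 0 ≤ q) (hq1 : q < 1) :
    0 < ∏' j : ℕ, (1 - q ^ (2 * j + 2)) := by
  rw [← Real.rexp_tsum_eq_tprod (fun _ => one_sub_pow_pos hq0 hq1 (by omega))
    (summable_log_one_sub_pow hq0 hq1)]
  exact Real.exp_pos _

end qPochSq

lemma tprod_le_prod_range {f : ℕ → ℝ} (h0 : ∀ j, 0 ≤ f j) (h1 : ∀ j, f j ≤ 1)
    (hf : Multipliable f) (k : ℕ) : ∏' j, f j ≤ ∏ j ∈ range k, f j := by
  refine Antitone.le_of_tendsto (antitone_nat_of_succ_le fun n => ?_) hf.hasProd.tendsto_prod_nat k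
  rw [prod_range_succ]
  exact mul_le_of_le_one_right (prod_nonneg fun j _ => h0 j) (h1 n)

lemma tprod_le_qPochSq {q : ℝ} (hq0 : 0 ≤ q) (hq1 : q < 1) (k : ℕ) :
    ∏' j : ℕ, (1 - q ^ (2 * j + 2)) ≤ qPochSq q k :=
  tprod_le_prod_range (fun _ => (one_sub_pow_pos hq0 hq1 (by omega)).le)
    (fun j => sub_le_self _ (pow_nonneg hq0 _))
    (Real.multipliable_of_summable_log (fun _ => one_sub_pow_pos hq0 hq1 (by omega))
      (summable_log_one_sub_pow hq0 hq1)) k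

lemma le_pow_mul_of_pred_le_mul {b : ℕ → ℝ} {q : ℝ} (hq0 : 0 ≤ q)
    (hqinc : ∀ n : ℕ, 1 ≤ n → b (n - 1) ≤ q * b n) {m n : ℕ} (hmn : m ≤ n) :
    b (n - m) ≤ q ^ m * b n := by
  induction m with
  | zero => simp
  | succ m ih =>
    calc b (n - (m + 1)) = b (n - m - 1) := by rw [Nat.sub_add_eq]
      _ ≤ q * b (n - m) := hqinc _ (by omega)
      _ ≤ q * (q ^ m * b n) := mul_le_mul_of_nonneg_left (ih (by omega)) hq0
      _ = q ^ (m + 1) * b n := by ring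

section usec

variable {b : ℕ → ℝ} {q : ℝ}

lemma usec_nonneg (hb : ∀ n, 0 ≤ b n) (n k : ℕ) : 0 ≤ usec b n k := by
  induction n generalizing k with
  | zero => cases k <;> simp [usec]
  | succ n ih =>
    cases k with
    | zero => exact ih 0
    | succ k =>
      rw [usec]
      have hA : 0 ≤ if 2 * (k + 1) ≤ n then b (n - 2 * (k + 1)) else 0 := by
        split <;> simp [hb]
      have hB : 0 ≤ if 2 * (k + 1) ≤ n + 1 then b (n + 1 - 2 * (k + 1)) else 0 := by
        split <;> simp [hb]
      exact div_nonneg (add_nonneg (mul_nonneg hA (ih _)) (mul_nonneg hB (ih _))) (hb n)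

lemma usec_le (hb : ∀ n, 0 < b n) (hq0 : 0 ≤ q) (hq1 : q < 1)
    (hqinc : ∀ n : ℕ, 1 ≤ n → b (n - 1) ≤ q * b n) (n k : ℕ) :
    usec b n k ≤ q ^ (k ^ 2) / qPochSq q k := by
  have hc (k : ℕ) : 0 ≤ q ^ (k ^ 2) / qPochSq q k :=
    div_nonneg (pow_nonneg hq0 _) (qPochSq_pos hq0 hq1 k).le
  induction n generalizing k with
  | zero =>
    cases k with
    | zero => simp [usec, qPochSq]
    | succ k => exact hc (k + 1)
  | succ n ih =>
    cases k with
    | zero => exact ih 0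
    | succ k =>
      rw [usec, div_le_iff₀ (hb n)]
      have hqb (m : ℕ) : 0 ≤ q ^ m * b n := mul_nonneg (pow_nonneg hq0 m) (hb n).le
      have hA : (if 2 * (k + 1) ≤ n then b (n - 2 * (k + 1)) else 0) ≤
          q ^ (2 * k + 2) * b n := by
        split
        · exact le_pow_mul_of_pred_le_mul hq0 hqinc (by omega)
        · exact hqb _
      have hB : (if 2 * (k + 1) ≤ n + 1 then b (n + 1 - 2 * (k + 1)) else 0) ≤
          q ^ (2 * k + 1) * b n := by
        split
        · rw [show n + 1 - 2 * (k + 1) = n - (2 * k + 1) by omega]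
          exact le_pow_mul_of_pred_le_mul hq0 hqinc (by omega)
        · exact hqb _
      calc _ ≤ q ^ (2 * k + 2) * b n * (q ^ ((k + 1) ^ 2) / qPochSq q (k + 1)) +
            q ^ (2 * k + 1) * b n * (q ^ (k ^ 2) / qPochSq q k) :=
            add_le_add (mul_le_mul hA (ih _) (usec_nonneg (fun n => (hb n).le) _ _) (hqb _))
              (mul_le_mul hB (ih _) (usec_nonneg (fun n => (hb n).le) _ _) (hqb _))
        _ = (q ^ (2 * k + 2) * (q ^ ((k + 1) ^ 2) / qPochSq q (k + 1)) +
            q ^ (2 * k + 1) * (q ^ (k ^ 2) / qPochSq q k)) * b n := by ring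
        _ = _ := by
          rw [pow_mul_add_pow_mul_div_qPochSq (one_sub_pow_pos hq0 hq1 (by omega)).ne']

lemma usec_le_inv_tprod_mul (hb : ∀ n, 0 < b n) (hq0 : 0 ≤ q) (hq1 : q < 1)
    (hqinc : ∀ n : ℕ, 1 ≤ n → b (n - 1) ≤ q * b n) (n k : ℕ) :
    usec b n k ≤ (∏' j : ℕ, (1 - q ^ (2 * j + 2)))⁻¹ * q ^ (k ^ 2) := by
  rw [inv_mul_eq_div]
  exact (usec_le hb hq0 hq1 hqinc n k).trans <| div_le_div_of_nonneg_left (pow_nonneg hq0 _)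
    (tprod_one_sub_pow_pos hq0 hq1) (tprod_le_qPochSq hq0 hq1 k)

lemma summable_pow_two_mul_sq (hq0 : 0 ≤ q) (hq1 : q < 1) :
    Summable fun k : ℕ => q ^ (2 * k ^ 2) :=
  (summable_geometric_of_lt_one hq0 hq1).of_nonneg_of_le (fun _ => pow_nonneg hq0 _)
    fun k => pow_le_pow_of_le_one hq0 hq1.le (by nlinarith)

lemma Useq_le (hb : ∀ n, 0 < b n) (hq0 : 0 ≤ q) (hq1 : q < 1)
    (hqinc : ∀ n : ℕ, 1 ≤ n → b (n - 1) ≤ q * b n) (n : ℕ) :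
    Useq b n ≤ ((∏' j : ℕ, (1 - q ^ (2 * j + 2)))⁻¹) ^ 2 * ∑' k : ℕ, q ^ (2 * k ^ 2) := by
  set C := (∏' j : ℕ, (1 - q ^ (2 * j + 2)))⁻¹
  calc Useq b n = ∑ k ∈ range (n / 2 + 1), usec b n k ^ 2 := rfl
    _ ≤ ∑ k ∈ range (n / 2 + 1), C ^ 2 * q ^ (2 * k ^ 2) := sum_le_sum fun k _ => by
        rw [pow_mul', ← mul_pow]
        exact pow_le_pow_left₀ (usec_nonneg (fun n => (hb n).le) n k)
          (usec_le_inv_tprod_mul hb hq0 hq1 hqinc n k) 2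
    _ = C ^ 2 * ∑ k ∈ range (n / 2 + 1), q ^ (2 * k ^ 2) := (mul_sum _ _ _).symm
    _ ≤ C ^ 2 * ∑' k : ℕ, q ^ (2 * k ^ 2) := by
        gcongr
        exact (summable_pow_two_mul_sq hq0 hq1).sum_le_tsum _ fun k _ => pow_nonneg hq0 _

end usec

/-- if `(b_n)` is `q`-increasing, then `u_{n,k} ≤ q^{k²}/(q²;q²)_k`
for all `n, k`, and `U_n ≤ (q²;q²)_∞⁻² ∑_k q^{2k²}`, so `(U_n)` is bounded. -/
theorem stmt7 (b : ℕ → ℝ) (q : ℝ) (hb : ∀ n, 0 < b n) (hq0 : 0 < q) (hq1 : q < 1)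
    (hqinc : ∀ n : ℕ, 1 ≤ n → b (n - 1) ≤ q * b n) :
    (∀ n k : ℕ, usec b n k ≤ q ^ (k ^ 2) / ∏ j ∈ Finset.range k, (1 - q ^ (2 * j + 2))) ∧
    (∀ n : ℕ, Useq b n ≤
      ((∏' j : ℕ, (1 - q ^ (2 * j + 2)))⁻¹) ^ 2 * ∑' k : ℕ, q ^ (2 * k ^ 2)) :=
  ⟨usec_le hb hq0.le hq1 hqinc, Useq_le hb hq0.le hq1 hqinc⟩
end

section
/- Assume $(b_n)$ is strictly increasing and log-concave. Then the coefficients satisfy $u_{n,0}=1$ and $u_{n,k} \leq \prod_{j=1}^k \frac{b_{n-2k+j-1}}{b_{n-j} - b_{n-2k+j-2}}$ for $1 \leq k \leq n/2$. -/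
theorem mul_succ_le_succ_mul_of_log_concave {b : ℕ → ℝ} (hb : ∀ n, 0 < b n)
    (hlc : ∀ n, b n * b (n + 2) ≤ b (n + 1) ^ 2) {m p : ℕ} (hmp : m ≤ p) :
    b m * b (p + 1) ≤ b (m + 1) * b p := by
  have hratio : Antitone fun n ↦ b (n + 1) / b n := by
    refine antitone_nat_of_succ_le fun n ↦ ?_
    rw [div_le_div_iff₀ (hb _) (hb _)]
    nlinarith [hlc n]
  have := hratio hmp
  rw [div_le_div_iff₀ (hb _) (hb _)] at this
  linarith

theorem usec_zero_right (b : ℕ → ℝ) (n : ℕ) : usec b n 0 = 1 := by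
  induction n with
  | zero => rfl
  | succ n ih => rw [usec, ih]

noncomputable def usecBound (b : ℕ → ℝ) (n k : ℕ) : ℝ :=
  ∏ j ∈ Finset.range k,
    b (n - 2 * k + j) /
      (b (n - (j + 1)) - (if 2 * k + 1 ≤ n + j then b (n + j - (2 * k + 1)) else 0))

theorem usecBound_succ_succ (b : ℕ → ℝ) {n k : ℕ} (hkn : 2 * (k + 1) ≤ n + 1) :
    usecBound b (n + 1) (k + 1) =
      b (n + 1 - 2 * (k + 1)) / (b n - (if 2 * (k + 1) ≤ n then b (n - 2 * (k + 1)) else 0)) *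
        usecBound b n k := by
  rw [usecBound, Finset.prod_range_succ', mul_comm, usecBound]
  congr 1
  · have : n + 1 + 0 - (2 * (k + 1) + 1) = n - 2 * (k + 1) := by omega
    simp only [add_zero, Nat.add_sub_cancel, Nat.add_le_add_iff_right, this]
  · refine Finset.prod_congr rfl fun j _ ↦ ?_
    have hcond : 2 * (k + 1) + 1 ≤ n + 1 + (j + 1) ↔ 2 * k + 1 ≤ n + j := by omega
    have hval : n + 1 + (j + 1) - (2 * (k + 1) + 1) = n + j - (2 * k + 1) := by omega
    have hnum : n + 1 - 2 * (k + 1) + (j + 1) = n - 2 * k + j := by omega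
    have hden : n + 1 - (j + 1 + 1) = n - (j + 1) := by omega
    rw [if_congr hcond (by rw [hval]) rfl, hnum, hden]

theorem mul_sub_le_mul_sub_of_log_concave {b : ℕ → ℝ} (hb : ∀ n, 0 < b n)
    (hlc : ∀ n, b n * b (n + 2) ≤ b (n + 1) ^ 2) {m p : ℕ} (hmp : m ≤ p) {c : ℝ}
    (hc : c * b (m + 1) ≤ b m ^ 2) :
    b m * (b (p + 1) - b m) ≤ b (m + 1) * (b p - c) := by
  nlinarith [mul_succ_le_succ_mul_of_log_concave hb hlc hmp]

theorem usecBound_denom_pos {b : ℕ → ℝ} (hb : ∀ n, 0 < b n) (hmono : StrictMono b)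
    {n k j : ℕ} (hj : j < k) :
    0 < b (n - (j + 1)) - (if 2 * k + 1 ≤ n + j then b (n + j - (2 * k + 1)) else 0) := by
  split_ifs
  · exact sub_pos.mpr (hmono (by omega))
  · simpa using hb _

theorem usecBound_le_usecBound_succ {b : ℕ → ℝ} (hb : ∀ n, 0 < b n) (hmono : StrictMono b)
    (hlc : ∀ n, b n * b (n + 2) ≤ b (n + 1) ^ 2) {n k : ℕ} (hkn : 2 * k ≤ n) :
    usecBound b n k ≤ usecBound b (n + 1) k := by
  refine Finset.prod_le_prod (fun j hj ↦ ?_) fun j hj ↦ ?_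
  · exact div_nonneg (hb _).le (usecBound_denom_pos hb hmono (Finset.mem_range.mp hj)).le
  have hjk := Finset.mem_range.mp hj
  rw [div_le_div_iff₀ (usecBound_denom_pos hb hmono hjk) (usecBound_denom_pos hb hmono hjk)]
  obtain ⟨m, hm⟩ : ∃ m, n - 2 * k + j = m := ⟨_, rfl⟩
  obtain ⟨p, hp⟩ : ∃ p, n - (j + 1) = p := ⟨_, rfl⟩
  have hnum : n + 1 - 2 * k + j = m + 1 := by omega
  have hden : n + 1 - (j + 1) = p + 1 := by omega
  have hprev : n + 1 + j - (2 * k + 1) = m := by omega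
  rw [hm, hp, hnum, hden, if_pos (by omega), hprev]
  refine mul_sub_le_mul_sub_of_log_concave hb hlc (by omega) ?_
  split_ifs with h
  · obtain ⟨i, rfl⟩ : ∃ i, m = i + 1 := ⟨m - 1, by omega⟩
    have hi : n + j - (2 * k + 1) = i := by omega
    simpa [hi] using hlc i
  · simpa using sq_nonneg (b m)

theorem usec_le_usecBound {b : ℕ → ℝ} (hb : ∀ n, 0 < b n) (hmono : StrictMono b)
    (hlc : ∀ n, b n * b (n + 2) ≤ b (n + 1) ^ 2) {n k : ℕ} (hkn : 2 * k ≤ n) :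
    usec b n k ≤ usecBound b n k := by
  induction n generalizing k with
  | zero =>
    obtain rfl : k = 0 := by omega
    simp [usec, usecBound]
  | succ n ih =>
    rcases k with _ | k
    · simp [usec_zero_right, usecBound]
    set c := if 2 * (k + 1) ≤ n then b (n - 2 * (k + 1)) else 0 with hc
    have hcb : c < b n := by
      rw [hc]
      split_ifs
      · exact hmono (by omega)
      · exact hb n
    have hrec : b n * usec b (n + 1) (k + 1) =
        c * usec b n (k + 1) + b (n + 1 - 2 * (k + 1)) * usec b n k := by
      rw [usec, if_pos hkn, mul_div_cancel₀ _ (hb n).ne']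
    have hbound : b (n + 1 - 2 * (k + 1)) * usecBound b n k =
        (b n - c) * usecBound b (n + 1) (k + 1) := by
      rw [usecBound_succ_succ b hkn, ← hc]
      field_simp [(sub_pos.mpr hcb).ne']
    have hfirst : c * usec b n (k + 1) ≤ c * usecBound b (n + 1) (k + 1) := by
      rw [hc]
      split_ifs with h
      · exact mul_le_mul_of_nonneg_left
          ((ih h).trans (usecBound_le_usecBound_succ hb hmono hlc h)) (hb _).le
      · simp
    have hsecond := mul_le_mul_of_nonneg_left (ih (k := k) (by omega))
      (hb (n + 1 - 2 * (k + 1))).le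
    refine le_of_mul_le_mul_left ?_ (hb n)
    linarith

/-- Here `b_m = 0` for `m < 0`, and the product index `j = 0,…,k-1` is the paper's `j - 1`. -/
theorem stmt8 (b : ℕ → ℝ) (hb : ∀ n, 0 < b n) (hmono : StrictMono b)
    (hlc : ∀ n : ℕ, b n * b (n + 2) ≤ b (n + 1) ^ 2) :
    (∀ n : ℕ, usec b n 0 = 1) ∧
    (∀ n k : ℕ, 1 ≤ k → 2 * k ≤ n →
      usec b n k ≤ ∏ j ∈ Finset.range k,
        b (n - 2 * k + j) /
          (b (n - (j + 1)) - (if 2 * k + 1 ≤ n + j then b (n + j - (2 * k + 1)) else 0))) :=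
  ⟨usec_zero_right b, fun _ _ _ hkn ↦ usec_le_usecBound hb hmono hlc hkn⟩
end
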